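/- Let u_h, u be compactly supported BV functions on an open set Ω ⊆ ℝ^d with {u_h ≠ 0}, {u ≠ 0} contained in a fixed open set E⁰ ⊂⊂ Ω of finite perimeter. Suppose each u_h is φ-1-superharmonic (i.e. ∫_Ω φ(−Du_h) ≤ ∫_Ω φ(−Dv) for every BV v ≥ u_h vanishing outside a compact subset of Ω), u_h → u uniformly, and ∫_Ω φ(−Du) ≤ liminf ∫_Ω φ(−Du_h) (lower semicontinuity). Then lim_{h→0} ∫_Ω φ(−Du_h) = ∫_Ω φ(−Du). -/

import Mathlib

open MeasureTheory Set Filter Metric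
open scoped Pointwise RealInnerProductSpace ENNReal Topology

noncomputable section

/-- `V d` is Euclidean `d`-space. -/
abbrev V (d : ℕ) := EuclideanSpace ℝ (Fin d)

/-- Divergence of a vector field on `V d`. -/
def dvg {d : ℕ} (z : V d → V d) (x : V d) : ℝ :=
  ∑ i, fderiv ℝ z x (EuclideanSpace.single i 1) i

/-- Candidate values, via admissible dual test fields, for the anisotropic total
variation `∫_Ω φ(−Du)` (dual/De Giorgi definition). -/
def tvSet {d : ℕ} (φ : V d → ℝ) (Ω : Set (V d)) (u : V d → ℝ) : Set ℝ :=
  {r | ∃ z : V d → V d, ContDiff ℝ 1 z ∧ HasCompactSupport z ∧ tsupport z ⊆ Ω ∧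
    (∀ x v, ⟪z x, v⟫ ≤ φ v) ∧ r = ∫ x in Ω, u x * dvg z x}

/-- Anisotropic total variation `∫_Ω φ(−Du)`. -/
def anisoTV {d : ℕ} (φ : V d → ℝ) (Ω : Set (V d)) (u : V d → ℝ) : ℝ := sSup (tvSet φ Ω u)

/-- `u` has bounded anisotropic variation in `Ω` (i.e. `u ∈ BV`). -/
def HasBoundedTV {d : ℕ} (φ : V d → ℝ) (Ω : Set (V d)) (u : V d → ℝ) : Prop :=
  BddAbove (tvSet φ Ω u)

/-- Anisotropic perimeter `P_φ(E)` (relative to `Ω`). -/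
def anisoPer {d : ℕ} (φ : V d → ℝ) (Ω E : Set (V d)) : ℝ := anisoTV φ Ω (E.indicator 1)

/-- `E` has finite anisotropic perimeter. -/
def FinPer {d : ℕ} (φ : V d → ℝ) (Ω E : Set (V d)) : Prop := HasBoundedTV φ Ω (E.indicator 1)

/-- `F ⊂⊂ Ω` : compactly contained. -/
def CpctIn {d : ℕ} (F Ω : Set (V d)) : Prop := IsCompact (closure F) ∧ closure F ⊆ Ω

/-- Signed anisotropic distance to `E` w.r.t. the (possibly non-symmetric) anisotropy `ψ`. -/
def sdist {d : ℕ} (ψ : V d → ℝ) (E : Set (V d)) (x : V d) : ℝ :=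
  sInf ((fun y => ψ (x - y)) '' E) - sInf ((fun y => ψ (y - x)) '' Eᶜ)

/-- Strong outward minimality condition `(MC_δ)` for `E` in `Ω`. -/
def MCd {d : ℕ} (φ : V d → ℝ) (Ω : Set (V d)) (δ : ℝ) (E : Set (V d)) : Prop :=
  ∀ F : Set (V d), CpctIn F Ω → FinPer φ univ F →
    anisoPer φ univ (E ∩ F) ≤ anisoPer φ univ F - δ * (volume (F \ E)).toReal

/-- The Almgren–Taylor–Wang functional. -/
def ATWfun {d : ℕ} (φ ψ : V d → ℝ) (E : Set (V d)) (h : ℝ) (F : Set (V d)) : ℝ :=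
  anisoPer φ univ F + (1 / h) * ∫ x in F, sdist ψ E x

/-- `G` is a minimizer of the ATW functional with datum `E` and time step `h`. -/
def IsATWmin {d : ℕ} (φ ψ : V d → ℝ) (E : Set (V d)) (h : ℝ) (G : Set (V d)) : Prop :=
  FinPer φ univ G ∧ ∀ F, FinPer φ univ F → ATWfun φ ψ E h G ≤ ATWfun φ ψ E h F

/-- `φ` is an admissible anisotropy: convex, positively one-homogeneous,
positive away from `0`. -/
def Anisotropy {d : ℕ} (φ : V d → ℝ) : Prop :=
  ConvexOn ℝ univ φ ∧ (∀ c : ℝ, 0 ≤ c → ∀ v, φ (c • v) = c * φ v) ∧ ∀ v : V d, v ≠ 0 → 0 < φ v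

/-- `u` is `φ`-1-superharmonic in `Ω`. -/
def OneSH {d : ℕ} (φ : V d → ℝ) (Ω : Set (V d)) (u : V d → ℝ) : Prop :=
  ∀ v : V d → ℝ, (∀ x, u x ≤ v x) → HasCompactSupport v → tsupport v ⊆ Ω →
    HasBoundedTV φ Ω v → anisoTV φ Ω u ≤ anisoTV φ Ω v

/-- `u` is `(φ,δ)`-1-superharmonic in `Ω`. -/
def OneSHd {d : ℕ} (φ : V d → ℝ) (Ω : Set (V d)) (δ : ℝ) (u : V d → ℝ) : Prop :=
  ∀ v : V d → ℝ, HasCompactSupport v → tsupport v ⊆ Ω → HasBoundedTV φ Ω v →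
    anisoTV φ Ω (fun x => min (u x) (v x)) ≤ anisoTV φ Ω v - δ * ∫ x in Ω, max (v x - u x) 0

/-
Uniform convergence gives `u_h ≤ u + ε χ_{E⁰}` for small `h`, and the right-hand side
is an admissible competitor for the superharmonicity of `u_h`. Since the total variation is
subadditive, `∫ φ(−Du_h) ≤ ∫ φ(−Du) + ε P_φ(E⁰)`, so the limsup is at most `∫ φ(−Du)`; the
liminf is at least that value by lower semicontinuity.
-/

section

variable {d : ℕ}

theorem Anisotropy.nonneg {φ : V d → ℝ} (hφ : Anisotropy φ) (v : V d) : 0 ≤ φ v := by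
  rcases eq_or_ne v 0 with rfl | hv
  · have h0 := hφ.2.1 0 le_rfl 0
    rw [zero_smul, zero_mul] at h0
    exact h0.ge
  · exact (hφ.2.2 v hv).le

section Divergence

variable {z : V d → V d}

theorem dvg_eq_zero_of_notMem_tsupport {x : V d} (hx : x ∉ tsupport z) : dvg z x = 0 := by
  have hfderiv : fderiv ℝ z x = 0 := by
    rw [(notMem_tsupport_iff_eventuallyEq.mp hx).fderiv_eq]
    exact fderiv_const_apply 0
  simp [dvg, hfderiv]

theorem support_dvg_subset_tsupport : Function.support (dvg z) ⊆ tsupport z :=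
  fun _ hx => by_contra fun h => hx (dvg_eq_zero_of_notMem_tsupport h)

theorem ContDiff.continuous_dvg (hz : ContDiff ℝ 1 z) : Continuous (dvg z) := by
  have hDz : Continuous (fderiv ℝ z) := (hz.fderiv_right (m := 0) le_rfl).continuous
  refine continuous_finsetSum _ fun i _ => ?_
  exact (continuous_apply i).comp ((PiLp.continuous_ofLp 2 _).comp
    ((ContinuousLinearMap.apply ℝ (V d) (EuclideanSpace.single i 1)).continuous.comp hDz))

theorem MeasureTheory.LocallyIntegrable.integrable_mul_dvg {g : V d → ℝ}
    (hg : LocallyIntegrable g) (hz : ContDiff ℝ 1 z) (hzc : HasCompactSupport z) :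
    Integrable (fun x => g x * dvg z x) :=
  hg.integrable_smul_right_of_hasCompactSupport hz.continuous_dvg
    (hzc.mono' support_dvg_subset_tsupport)

end Divergence

section TotalVariation

variable {φ : V d → ℝ} {Ω : Set (V d)}

theorem zero_mem_tvSet (hφ : ∀ v, 0 ≤ φ v) (w : V d → ℝ) : (0 : ℝ) ∈ tvSet φ Ω w := by
  refine ⟨fun _ => 0, contDiff_const, HasCompactSupport.zero, ?_, fun _ v => ?_, ?_⟩
  · simp [tsupport]
  · simpa using hφ v
  · simp [dvg]

/-- Holds also for `w` of unbounded variation, where `sSup` takes the junk value `0`. -/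
theorem anisoTV_nonneg (hφ : ∀ v, 0 ≤ φ v) (w : V d → ℝ) : 0 ≤ anisoTV φ Ω w := by
  by_cases hw : HasBoundedTV φ Ω w
  · exact le_csSup hw (zero_mem_tvSet hφ w)
  · exact (Real.sSup_of_not_bddAbove hw).ge

theorem tvSet_subset_tvSet_univ (w : V d → ℝ) : tvSet φ Ω w ⊆ tvSet φ univ w := by
  rintro r ⟨z, hz, hzc, hzΩ, hzφ, rfl⟩
  refine ⟨z, hz, hzc, subset_univ _, hzφ, ?_⟩
  rw [setIntegral_univ, setIntegral_eq_integral_of_forall_compl_eq_zero fun x hx => by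
    rw [dvg_eq_zero_of_notMem_tsupport fun h => hx (hzΩ h), mul_zero]]

theorem FinPer.hasBoundedTV {E : Set (V d)} (hE : FinPer φ univ E) :
    HasBoundedTV φ Ω (E.indicator 1) :=
  hE.mono (tvSet_subset_tvSet_univ _)

theorem tvSet_add_mul_le (hφ : ∀ v, 0 ≤ φ v) {w g : V d → ℝ} (hw : HasBoundedTV φ Ω w)
    (hg : HasBoundedTV φ Ω g) (hg_int : LocallyIntegrable g) {c : ℝ} (hc : 0 ≤ c) :
    ∀ r ∈ tvSet φ Ω (fun x => w x + c * g x), r ≤ anisoTV φ Ω w + c * anisoTV φ Ω g := by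
  rintro r ⟨z, hz, hzc, hzΩ, hzφ, rfl⟩
  have hgz : IntegrableOn (fun x => g x * dvg z x) Ω :=
    (hg_int.integrable_mul_dvg hz hzc).integrableOn
  by_cases hsum : IntegrableOn (fun x => (w x + c * g x) * dvg z x) Ω
  · have hwz : IntegrableOn (fun x => w x * dvg z x) Ω := by
      convert hsum.sub (hgz.const_mul c) using 1
      ext x
      simp only [Pi.sub_apply]
      ring
    have hsplit : ∫ x in Ω, (w x + c * g x) * dvg z x
        = (∫ x in Ω, w x * dvg z x) + c * ∫ x in Ω, g x * dvg z x := by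
      rw [← integral_const_mul, ← integral_add hwz (hgz.const_mul c)]
      congr 1
      ext x
      ring
    rw [hsplit]
    gcongr
    · exact le_csSup hw ⟨z, hz, hzc, hzΩ, hzφ, rfl⟩
    · exact le_csSup hg ⟨z, hz, hzc, hzΩ, hzφ, rfl⟩
  · rw [integral_undef hsum]
    have hw0 := anisoTV_nonneg (Ω := Ω) hφ w
    have hg0 := anisoTV_nonneg (Ω := Ω) hφ g
    positivity

theorem anisoTV_add_mul_le (hφ : ∀ v, 0 ≤ φ v) {w g : V d → ℝ} (hw : HasBoundedTV φ Ω w)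
    (hg : HasBoundedTV φ Ω g) (hg_int : LocallyIntegrable g) {c : ℝ} (hc : 0 ≤ c) :
    HasBoundedTV φ Ω (fun x => w x + c * g x) ∧
      anisoTV φ Ω (fun x => w x + c * g x) ≤ anisoTV φ Ω w + c * anisoTV φ Ω g :=
  ⟨⟨_, tvSet_add_mul_le hφ hw hg hg_int hc⟩,
    csSup_le ⟨0, zero_mem_tvSet hφ _⟩ (tvSet_add_mul_le hφ hw hg hg_int hc)⟩

end TotalVariation

theorem CpctIn.hasCompactSupport {E Ω : Set (V d)} (hE : CpctIn E Ω) {v : V d → ℝ}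
    (hv : Function.support v ⊆ E) : HasCompactSupport v :=
  hE.1.of_isClosed_subset isClosed_closure (closure_mono hv)

theorem CpctIn.tsupport_subset {E Ω : Set (V d)} (hE : CpctIn E Ω) {v : V d → ℝ}
    (hv : Function.support v ⊆ E) : tsupport v ⊆ Ω :=
  (closure_mono hv).trans hE.2

theorem le_add_mul_indicator {E : Set (V d)} {w u : V d → ℝ} (hw : Function.support w ⊆ E)
    (hu : Function.support u ⊆ E) {ε : ℝ} (hclose : ∀ x, w x ≤ u x + ε) (x : V d) :
    w x ≤ u x + ε * E.indicator 1 x := by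
  by_cases hx : x ∈ E
  · simpa [hx] using hclose x
  · simp [hx, Function.notMem_support.mp fun h => hx (hw h),
      Function.notMem_support.mp fun h => hx (hu h)]

theorem OneSH.anisoTV_le_add_mul_anisoPer {φ : V d → ℝ} {Ω E : Set (V d)} {w u : V d → ℝ}
    (hsh : OneSH φ Ω w) (hφ : ∀ v, 0 ≤ φ v) (hEm : MeasurableSet E) (hE : CpctIn E Ω)
    (hEper : FinPer φ univ E) (hw : Function.support w ⊆ E) (hu : Function.support u ⊆ E)
    (hu_bv : HasBoundedTV φ Ω u) {ε : ℝ} (hε : 0 ≤ ε) (hclose : ∀ x, w x ≤ u x + ε) :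
    anisoTV φ Ω w ≤ anisoTV φ Ω u + ε * anisoPer φ Ω E := by
  obtain ⟨hv_bv, hv_le⟩ := anisoTV_add_mul_le hφ hu_bv hEper.hasBoundedTV
    (locallyIntegrable_const 1 |>.indicator hEm) hε
  have hv_supp : Function.support (fun x => u x + ε * E.indicator 1 x) ⊆ E :=
    (Function.support_add _ _).trans <| union_subset hu <|
      (Function.support_mul_subset_right _ _).trans support_indicator_subset
  exact (hsh _ (le_add_mul_indicator hw hu hclose) (hE.hasCompactSupport hv_supp)
    (hE.tsupport_subset hv_supp) hv_bv).trans hv_le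

theorem Filter.tendsto_of_le_liminf_of_forall_eventually_le_add_mul {α : Type*} {l : Filter α}
    {f : α → ℝ} {A C : ℝ} (hbdd : IsBoundedUnder (· ≥ ·) l f) (hlsc : A ≤ liminf f l)
    (hup : ∀ ε > 0, ∀ᶠ x in l, f x ≤ A + ε * C) : Tendsto f l (𝓝 A) := by
  refine tendsto_order.2 ⟨fun a ha => eventually_lt_of_lt_liminf (ha.trans_le hlsc) hbdd,
    fun a ha => ?_⟩
  have hε : 0 < (a - A) / (|C| + 1) := div_pos (sub_pos.2 ha) (by positivity)
  filter_upwards [hup _ hε] with x hx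
  have hεC : (a - A) / (|C| + 1) * C < a - A := by
    rw [div_mul_eq_mul_div, div_lt_iff₀ (by positivity)]
    nlinarith [le_abs_self C]
  linarith

end

theorem strict_TV_convergence_general {d : ℕ} (φ : V d → ℝ) (hφ : Anisotropy φ)
    (Ω E0 : Set (V d)) (hE0 : IsOpen E0) (hE0c : CpctIn E0 Ω)
    (hE0fp : FinPer φ univ E0)
    (u : ℝ → V d → ℝ) (ulim : V d → ℝ)
    (hsupp : ∀ h : ℝ, 0 < h → Function.support (u h) ⊆ E0)
    (hsupplim : Function.support ulim ⊆ E0)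
    (hbvlim : HasBoundedTV φ Ω ulim)
    (hsh : ∀ h : ℝ, 0 < h → OneSH φ Ω (u h))
    (hunif : TendstoUniformly u ulim (𝓝[>] (0 : ℝ)))
    (hlsc : anisoTV φ Ω ulim ≤
      Filter.liminf (fun h => anisoTV φ Ω (u h)) (𝓝[>] (0 : ℝ))) :
    Filter.Tendsto (fun h => anisoTV φ Ω (u h)) (𝓝[>] (0 : ℝ))
      (𝓝 (anisoTV φ Ω ulim)) := by
  refine tendsto_of_le_liminf_of_forall_eventually_le_add_mul (C := anisoPer φ Ω E0)
    ⟨0, eventually_map.2 (.of_forall fun h => anisoTV_nonneg hφ.nonneg (u h))⟩ hlsc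
    fun ε hε => ?_
  filter_upwards [Metric.tendstoUniformly_iff.mp hunif ε hε, self_mem_nhdsWithin]
    with h hclose hpos
  exact (hsh h hpos).anisoTV_le_add_mul_anisoPer hφ.nonneg hE0.measurableSet hE0c hE0fp
    (hsupp h hpos) hsupplim hbvlim hε.le fun x => by
      linarith [(abs_sub_lt_iff.mp (Real.dist_eq _ _ ▸ hclose x)).2]

/-- Strict convergence of the anisotropic total variations: if
the `φ`-1-superharmonic functions `u_h` (supported in a fixed finite perimeter
set `E⁰ ⊂⊂ Ω`) converge uniformly to `u` and the total variation is lower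
semicontinuous along the family, then `∫_Ω φ(−Du_h) → ∫_Ω φ(−Du)`. -/
theorem strict_TV_convergence {d : ℕ} (φ : V d → ℝ) (hφ : Anisotropy φ)
    (Ω E0 : Set (V d)) (hΩ : IsOpen Ω) (hE0 : IsOpen E0) (hE0c : CpctIn E0 Ω)
    (hE0fp : FinPer φ univ E0)
    (u : ℝ → V d → ℝ) (ulim : V d → ℝ)
    (hsupp : ∀ h : ℝ, 0 < h → Function.support (u h) ⊆ E0)
    (hsupplim : Function.support ulim ⊆ E0)
    (hbv : ∀ h : ℝ, 0 < h → HasBoundedTV φ Ω (u h))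
    (hbvlim : HasBoundedTV φ Ω ulim)
    (hsh : ∀ h : ℝ, 0 < h → OneSH φ Ω (u h))
    (hunif : TendstoUniformly u ulim (𝓝[>] (0 : ℝ)))
    (hlsc : anisoTV φ Ω ulim ≤
      Filter.liminf (fun h => anisoTV φ Ω (u h)) (𝓝[>] (0 : ℝ))) :
    Filter.Tendsto (fun h => anisoTV φ Ω (u h)) (𝓝[>] (0 : ℝ))
      (𝓝 (anisoTV φ Ω ulim)) :=
  strict_TV_convergence_general φ hφ Ω E0 hE0 hE0c hE0fp u ulim hsupp hsupplim hbvlim hsh hunif hlsc
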